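/- arXiv:1904.07440 — 2 statements merged into one kernel-verified Lean document; each statement's English description precedes it below -/
import Mathlib

section
/- If s = -α g where α = 2/(γ + √(γ² + 4σ‖g‖)), γ ≥ 0, σ > 0, then ‖s‖ ≤ √(‖g‖/σ). -/
/-! Write `r = ‖g‖` and `D = γ + √(γ² + 4σr)`. Since `γ ≥ 0`, `D² ≥ γ² + 4σr ≥ 4σr`, hence
`‖s‖² = 4r²/D² ≤ 4r²/(4σr) = r/σ`. -/

open Real

lemma sq_add_le_sq_add_sqrt_sq_add {γ q : ℝ} (hγ : 0 ≤ γ) (hq : 0 ≤ q) :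
    γ ^ 2 + q ≤ (γ + √(γ ^ 2 + q)) ^ 2 := by
  have hsq : √(γ ^ 2 + q) ^ 2 = γ ^ 2 + q := sq_sqrt (by positivity)
  nlinarith [sqrt_nonneg (γ ^ 2 + q)]

lemma two_div_add_sqrt_mul_le_sqrt_div {γ σ r : ℝ} (hγ : 0 ≤ γ) (hσ : 0 < σ) (hr : 0 ≤ r) :
    2 / (γ + √(γ ^ 2 + 4 * σ * r)) * r ≤ √(r / σ) := by
  rcases hr.eq_or_lt with rfl | hr
  · simp
  have hD := sq_add_le_sq_add_sqrt_sq_add hγ (by positivity : 0 ≤ 4 * σ * r)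
  apply le_sqrt_of_sq_le
  rw [div_mul_eq_mul_div, div_pow, div_le_div_iff₀ (by positivity) hσ]
  nlinarith [mul_le_mul_of_nonneg_left hD hr.le, sq_nonneg γ]

lemma norm_two_div_add_sqrt_smul_le {E : Type*} [NormedAddCommGroup E] [NormedSpace ℝ E]
    {γ σ : ℝ} (hγ : 0 ≤ γ) (hσ : 0 < σ) (g : E) :
    ‖(2 / (γ + √(γ ^ 2 + 4 * σ * ‖g‖))) • g‖ ≤ √(‖g‖ / σ) := by
  rw [norm_smul, norm_of_nonneg (by positivity)]
  exact two_div_add_sqrt_mul_le_sqrt_div hγ hσ (norm_nonneg g)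

theorem step_norm_bound (n : ℕ) (g : EuclideanSpace ℝ (Fin n)) (γ σ : ℝ)
    (hγ : γ ≥ 0) (hσ : σ > 0)
    (s : EuclideanSpace ℝ (Fin n))
    (hs : s = -((2 / (γ + Real.sqrt (γ ^ 2 + 4 * σ * ‖g‖))) • g)) :
    ‖s‖ ≤ Real.sqrt (‖g‖ / σ) := by
  rw [hs, norm_neg]
  exact norm_two_div_add_sqrt_smul_le hγ hσ g
end

section
/- For the cubic model m(s) = f₀ + gᵀs + (1/2)γ‖s‖² + (1/3)σ‖s‖³ with minimizer s* = -α g where α = 2/(γ + √(γ² + 4σ‖g‖)), the predicted decrease satisfies f₀ - m(s*) ≥ ‖g‖²/(6(γ + 2√(σ‖g‖))). -/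
/-!
Along `-α • g` the model decreases by `α‖g‖² - γα²‖g‖²/2 - σα³‖g‖³/3`. The given `α` is the
positive root of `σ‖g‖ α² + γ α = 1` (the quadratic formula with the square root moved to the
denominator), i.e. the stationarity condition of the model along that ray; substituting it
leaves the decrease `α‖g‖²/2 + σα³‖g‖³/6 ≥ α‖g‖²/2`. Finally `√(γ² + 4σ‖g‖) ≤ γ + 2√(σ‖g‖)`
gives `α ≥ 1 / (γ + √(σ‖g‖))`.
-/

open scoped RealInnerProductSpace

noncomputable def cubicModel {E : Type*} [NormedAddCommGroup E] [InnerProductSpace ℝ E]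
    (f₀ : ℝ) (g : E) (γ σ : ℝ) (s : E) : ℝ :=
  f₀ + ⟪g, s⟫ + (1 / 2) * γ * ‖s‖ ^ 2 + (1 / 3) * σ * ‖s‖ ^ 3

noncomputable def cubicStep (γ c : ℝ) : ℝ := 2 / (γ + √(γ ^ 2 + 4 * c))

section Step

variable {γ c : ℝ}

lemma sqrt_sq_add_four_mul_le (hγ : 0 ≤ γ) (hc : 0 ≤ c) :
    √(γ ^ 2 + 4 * c) ≤ γ + 2 * √c :=
  Real.sqrt_le_iff.mpr ⟨by positivity, by nlinarith [Real.sq_sqrt hc, Real.sqrt_nonneg c]⟩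

lemma cubicStep_pos (hγ : 0 < γ) (hc : 0 ≤ c) : 0 < cubicStep γ c := by
  unfold cubicStep
  positivity

lemma mul_cubicStep_add_mul_sq (hγ : 0 < γ) (hc : 0 ≤ c) :
    γ * cubicStep γ c + c * cubicStep γ c ^ 2 = 1 := by
  set D := √(γ ^ 2 + 4 * c)
  have hD : D ^ 2 = γ ^ 2 + 4 * c := Real.sq_sqrt (by positivity)
  have hstep : cubicStep γ c * (γ + D) = 2 :=
    div_mul_cancel₀ 2 (by positivity : 0 < γ + D).ne'
  linear_combination (cubicStep γ c * (D - γ) / 4 + 1 / 2) * hstep - cubicStep γ c ^ 2 / 4 * hD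

lemma one_div_add_sqrt_le_cubicStep (hγ : 0 < γ) (hc : 0 ≤ c) :
    1 / (γ + √c) ≤ cubicStep γ c := by
  have hle : γ + √(γ ^ 2 + 4 * c) ≤ 2 * (γ + √c) := by
    linarith [sqrt_sq_add_four_mul_le hγ.le hc]
  calc 1 / (γ + √c) = 2 / (2 * (γ + √c)) := by field_simp
    _ ≤ cubicStep γ c := div_le_div_of_nonneg_left zero_le_two (by positivity) hle

end Step

section Model

variable {E : Type*} [NormedAddCommGroup E] [InnerProductSpace ℝ E] (f₀ : ℝ) (g : E) (γ σ : ℝ)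

lemma sub_cubicModel_neg_smul {α : ℝ} (hα : 0 ≤ α) :
    f₀ - cubicModel f₀ g γ σ (-(α • g)) =
      α * ‖g‖ ^ 2 - γ / 2 * α ^ 2 * ‖g‖ ^ 2 - σ / 3 * α ^ 3 * ‖g‖ ^ 3 := by
  rw [cubicModel, inner_neg_right, real_inner_smul_right, real_inner_self_eq_norm_sq, norm_neg,
    norm_smul, Real.norm_of_nonneg hα]
  ring

lemma sub_cubicModel_cubicStep (hγ : 0 < γ) (hσ : 0 ≤ σ) :
    f₀ - cubicModel f₀ g γ σ (-(cubicStep γ (σ * ‖g‖) • g)) =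
      cubicStep γ (σ * ‖g‖) * ‖g‖ ^ 2 / 2 + σ * cubicStep γ (σ * ‖g‖) ^ 3 * ‖g‖ ^ 3 / 6 := by
  have hc : 0 ≤ σ * ‖g‖ := by positivity
  rw [sub_cubicModel_neg_smul f₀ g γ σ (cubicStep_pos hγ hc).le]
  linear_combination (-(cubicStep γ (σ * ‖g‖) * ‖g‖ ^ 2) / 2) * mul_cubicStep_add_mul_sq hγ hc

lemma div_le_sub_cubicModel_cubicStep (hγ : 0 < γ) (hσ : 0 ≤ σ) :
    ‖g‖ ^ 2 / (2 * (γ + √(σ * ‖g‖))) ≤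
      f₀ - cubicModel f₀ g γ σ (-(cubicStep γ (σ * ‖g‖) • g)) := by
  have hc : 0 ≤ σ * ‖g‖ := by positivity
  have hstep := one_div_add_sqrt_le_cubicStep hγ hc
  have hcubic : 0 ≤ σ * cubicStep γ (σ * ‖g‖) ^ 3 * ‖g‖ ^ 3 / 6 := by
    have := cubicStep_pos hγ hc
    positivity
  rw [sub_cubicModel_cubicStep f₀ g γ σ hγ hσ]
  calc ‖g‖ ^ 2 / (2 * (γ + √(σ * ‖g‖))) = 1 / (γ + √(σ * ‖g‖)) * ‖g‖ ^ 2 / 2 := by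
        field_simp
    _ ≤ cubicStep γ (σ * ‖g‖) * ‖g‖ ^ 2 / 2 := by gcongr
    _ ≤ _ := le_add_of_nonneg_right hcubic

end Model

theorem predicted_decrease_general (n : ℕ) (f₀ : ℝ) (g : EuclideanSpace ℝ (Fin n))
    (γ σ : ℝ) (hγ : γ > 0) (hσ : σ > 0)
    (m : EuclideanSpace ℝ (Fin n) → ℝ)
    (hm : ∀ s, m s = f₀ + ⟪g, s⟫ + (1 / 2) * γ * ‖s‖ ^ 2 + (1 / 3) * σ * ‖s‖ ^ 3)
    (sstar : EuclideanSpace ℝ (Fin n))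
    (hsstar : sstar = -((2 / (γ + Real.sqrt (γ ^ 2 + 4 * σ * ‖g‖))) • g)) :
    f₀ - m sstar ≥ ‖g‖ ^ 2 / (6 * (γ + 2 * Real.sqrt (σ * ‖g‖))) := by
  have hsstar' : sstar = -(cubicStep γ (σ * ‖g‖) • g) := by
    rw [hsstar, cubicStep, mul_assoc]
  rw [hm, ← cubicModel, hsstar', ge_iff_le]
  refine le_trans ?_ (div_le_sub_cubicModel_cubicStep f₀ g γ σ hγ hσ.le)
  have hroot := Real.sqrt_nonneg (σ * ‖g‖)
  exact div_le_div_of_nonneg_left (sq_nonneg _) (by positivity) (by linarith)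

theorem predicted_decrease (n : ℕ) (f₀ : ℝ) (g : EuclideanSpace ℝ (Fin n)) (hg : g ≠ 0)
    (γ σ : ℝ) (hγ : γ > 0) (hσ : σ > 0)
    (m : EuclideanSpace ℝ (Fin n) → ℝ)
    (hm : ∀ s, m s = f₀ + ⟪g, s⟫ + (1 / 2) * γ * ‖s‖ ^ 2 + (1 / 3) * σ * ‖s‖ ^ 3)
    (sstar : EuclideanSpace ℝ (Fin n))
    (hsstar : sstar = -((2 / (γ + Real.sqrt (γ ^ 2 + 4 * σ * ‖g‖))) • g)) :
    f₀ - m sstar ≥ ‖g‖ ^ 2 / (6 * (γ + 2 * Real.sqrt (σ * ‖g‖))) :=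
  predicted_decrease_general n f₀ g γ σ hγ hσ m hm sstar hsstar
end
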